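/- arXiv:2403.01330 — 7 statements merged into one kernel-verified Lean document; each statement's English description precedes it below -/
import Mathlib

section
/- An optimal propensity score match contains no crossing matches: if T and C are finite disjoint sets of units with distinct real propensity scores and μ : T → C is an optimal pair matching, then there exist no two distinct treated units t₁, t₂ ∈ T such that the matched pairs (t₁, μ(t₁)) and (t₂, μ(t₂)) form a crossing match. -/
/-- `μ` is a pair matching of the treated units `T` to the control units `C`:
an injection (on `T`) mapping each treated unit to a control unit. -/
def IsMatching {α : Type*} (T C : Finset α) (μ : α → α) : Prop :=
  Set.InjOn μ ↑T ∧ ∀ t ∈ T, μ t ∈ C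

/-- The cost of a pair matching: the total absolute propensity-score
discrepancy `Σ_{t ∈ T} |λ_t − λ_{μ(t)}|`. -/
noncomputable def matchCost {α : Type*} (score : α → ℝ) (T : Finset α) (μ : α → α) : ℝ :=
  ∑ t ∈ T, |score t - score (μ t)|

/-- `μ` is an optimal pair matching of `T` to `C`: it is a pair matching and
it minimizes the cost over all pair matchings of `T` to `C`. -/
def IsOptimalMatching {α : Type*} (score : α → ℝ) (T C : Finset α) (μ : α → α) : Prop :=
  IsMatching T C μ ∧
    ∀ ν : α → α, IsMatching T C ν → matchCost score T μ ≤ matchCost score T ν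

/-- Two matched pairs with treated scores `t1, t2` and control scores `c1, c2`
form a crossing match if `max{t1, c2} < min{c1, t2}` or `max{t2, c1} < min{c2, t1}`. -/
def CrossingMatch (t1 c1 t2 c2 : ℝ) : Prop :=
  max t1 c2 < min c1 t2 ∨ max t2 c1 < min c2 t1

/-!
Exchanging the control units of two crossing pairs strictly lowers the total score
discrepancy, while every other pair of the matching is left untouched; so a matching with a
crossing cannot be optimal.
-/

lemma CrossingMatch.abs_sub_add_abs_sub_lt {t1 c1 t2 c2 : ℝ} (h : CrossingMatch t1 c1 t2 c2) :
    |t1 - c2| + |t2 - c1| < |t1 - c1| + |t2 - c2| := by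
  rcases h with h | h <;> simp only [max_lt_iff, lt_min_iff] at h <;>
    cases abs_cases (t1 - c1) <;> cases abs_cases (t2 - c2) <;>
    cases abs_cases (t1 - c2) <;> cases abs_cases (t2 - c1) <;> linarith

lemma Equiv.swap_apply_mem {α : Type*} [DecidableEq α] {s : Finset α} {a b x : α}
    (ha : a ∈ s) (hb : b ∈ s) (hx : x ∈ s) : Equiv.swap a b x ∈ s := by
  rw [Equiv.swap_apply_def]
  split_ifs <;> assumption

section Matching

variable {α : Type*} [DecidableEq α] {T C : Finset α} {μ : α → α} {t1 t2 : α}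

lemma IsMatching.comp_swap (hμ : IsMatching T C μ) (ht1 : t1 ∈ T) (ht2 : t2 ∈ T) :
    IsMatching T C (μ ∘ Equiv.swap t1 t2) :=
  ⟨fun _ hx _ hy hxy => (Equiv.swap t1 t2).injective <|
      hμ.1 (Equiv.swap_apply_mem ht1 ht2 hx) (Equiv.swap_apply_mem ht1 ht2 hy) hxy,
    fun _ ht => hμ.2 _ (Equiv.swap_apply_mem ht1 ht2 ht)⟩

lemma matchCost_comp_swap (score : α → ℝ) (ht1 : t1 ∈ T) (ht2 : t2 ∈ T) (hne : t1 ≠ t2) :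
    matchCost score T (μ ∘ Equiv.swap t1 t2) - matchCost score T μ
      = |score t1 - score (μ t2)| + |score t2 - score (μ t1)|
        - (|score t1 - score (μ t1)| + |score t2 - score (μ t2)|) := by
  rw [matchCost, matchCost, ← Finset.sum_sub_distrib,
    Finset.sum_eq_add_of_mem t1 t2 ht1 ht2 hne fun t _ ht => by
      simp [Equiv.swap_apply_of_ne_of_ne ht.1 ht.2]]
  simp only [Function.comp_apply, Equiv.swap_apply_left, Equiv.swap_apply_right]
  ring

end Matching

theorem optimal_match_no_crossing_general {α : Type*}
    (score : α → ℝ) (T C : Finset α)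
    (μ : α → α) (hopt : IsOptimalMatching score T C μ) :
    ¬ ∃ t1 ∈ T, ∃ t2 ∈ T, t1 ≠ t2 ∧
        CrossingMatch (score t1) (score (μ t1)) (score t2) (score (μ t2)) := by
  classical
  rintro ⟨t1, ht1, t2, ht2, hne, hcross⟩
  have hle := hopt.2 _ (hopt.1.comp_swap ht1 ht2)
  have hcost := matchCost_comp_swap score (μ := μ) ht1 ht2 hne
  have hlt := hcross.abs_sub_add_abs_sub_lt
  linarith

/-- An optimal propensity score match contains no crossing matches (Lemma S1,
from Sävje 2021): if `T` and `C` are finite disjoint sets of units with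
distinct propensity scores and `μ` is an optimal pair matching of `T` to `C`,
then no two distinct treated units have matched pairs forming a crossing match. -/
theorem optimal_match_no_crossing {α : Type*}
    (score : α → ℝ) (T C : Finset α)
    (hdisj : Disjoint T C)
    (hinj : Set.InjOn score (↑T ∪ ↑C))
    (μ : α → α) (hopt : IsOptimalMatching score T C μ) :
    ¬ ∃ t1 ∈ T, ∃ t2 ∈ T, t1 ≠ t2 ∧
        CrossingMatch (score t1) (score (μ t1)) (score t2) (score (μ t2)) :=
  optimal_match_no_crossing_general score T C μ hopt
end

section
/- If two matched pairs (t₁, c₁) and (t₂, c₂) (with treated units t₁, t₂, control units c₁, c₂, and four distinct real propensity scores) are overlapping and do not form a crossing match, then the treated–control score differences have the same sign in both pairs: (λ_{t₁} − λ_{c₁}) and (λ_{t₂} − λ_{c₂}) are either both positive or both negative. -/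
/-- Two matched pairs, with respective score pairs `(x1, y1)` and `(x2, y2)`, are
overlapping if, writing each pair's scores as `(hᵢ, ℓᵢ)` with `hᵢ > ℓᵢ`,
either `h1 > h2 > ℓ1` or `h2 > h1 > ℓ2`. -/
def Overlapping (x1 y1 x2 y2 : ℝ) : Prop :=
  (max x1 y1 > max x2 y2 ∧ max x2 y2 > min x1 y1) ∨
  (max x2 y2 > max x1 y1 ∧ max x1 y1 > min x2 y2)

namespace Overlapping

variable {t1 c1 t2 c2 : ℝ}

theorem min_lt_max (h : Overlapping t1 c1 t2 c2) :
    min t1 c1 < max t2 c2 ∧ min t2 c2 < max t1 c1 := by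
  rcases h with ⟨h12, h21⟩ | ⟨h21, h12⟩
  · exact ⟨h21, (min_le_max).trans_lt h12⟩
  · exact ⟨(min_le_max).trans_lt h21, h12⟩

theorem crossingMatch_of_lt_of_lt (h : Overlapping t1 c1 t2 c2) (h₁ : t1 < c1)
    (h₂ : c2 < t2) : CrossingMatch t1 c1 t2 c2 := by
  obtain ⟨hlo, hhi⟩ := h.min_lt_max
  rw [min_eq_left h₁.le, max_eq_left h₂.le] at hlo
  rw [min_eq_right h₂.le, max_eq_right h₁.le] at hhi
  exact Or.inl (max_lt (lt_min h₁ hlo) (lt_min hhi h₂))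

theorem crossingMatch_of_lt_of_lt' (h : Overlapping t1 c1 t2 c2) (h₁ : c1 < t1)
    (h₂ : t2 < c2) : CrossingMatch t1 c1 t2 c2 := by
  obtain ⟨hlo, hhi⟩ := h.min_lt_max
  rw [min_eq_right h₁.le, max_eq_right h₂.le] at hlo
  rw [min_eq_left h₂.le, max_eq_left h₁.le] at hhi
  exact Or.inr (max_lt (lt_min h₂ hhi) (lt_min hlo h₁))

end Overlapping

theorem overlapping_not_crossing_same_sign_general
    (lt1 lc1 lt2 lc2 : ℝ)
    (h1 : lt1 ≠ lc1)
    (h6 : lt2 ≠ lc2)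
    (hover : Overlapping lt1 lc1 lt2 lc2)
    (hnocross : ¬ CrossingMatch lt1 lc1 lt2 lc2) :
    (0 < lt1 - lc1 ∧ 0 < lt2 - lc2) ∨ (lt1 - lc1 < 0 ∧ lt2 - lc2 < 0) := by
  rcases h1.lt_or_gt with d1 | d1 <;> rcases h6.lt_or_gt with d2 | d2
  · exact Or.inr ⟨sub_neg.2 d1, sub_neg.2 d2⟩
  · exact absurd (hover.crossingMatch_of_lt_of_lt d1 d2) hnocross
  · exact absurd (hover.crossingMatch_of_lt_of_lt' d1 d2) hnocross
  · exact Or.inl ⟨sub_pos.2 d1, sub_pos.2 d2⟩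

/-- If two matched pairs `(t1, c1)` and `(t2, c2)` with four distinct propensity
scores are overlapping and do not form a crossing match, then the treated–control
score differences have the same sign in both pairs. -/
theorem overlapping_not_crossing_same_sign
    (lt1 lc1 lt2 lc2 : ℝ)
    (h1 : lt1 ≠ lc1) (h2 : lt1 ≠ lt2) (h3 : lt1 ≠ lc2)
    (h4 : lc1 ≠ lt2) (h5 : lc1 ≠ lc2) (h6 : lt2 ≠ lc2)
    (hover : Overlapping lt1 lc1 lt2 lc2)
    (hnocross : ¬ CrossingMatch lt1 lc1 lt2 lc2) :
    (0 < lt1 - lc1 ∧ 0 < lt2 - lc2) ∨ (lt1 - lc1 < 0 ∧ lt2 - lc2 < 0) :=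
  overlapping_not_crossing_same_sign_general lt1 lc1 lt2 lc2 h1 h6 hover hnocross
end

section
/- Suppose two matched pairs (t₁, c₁) and (t₂, c₂) (treated units t₁, t₂, control units c₁, c₂, four distinct real propensity scores) are overlapping and do not form a crossing match. Then exchanging the treated and control roles within exactly one of the two pairs produces pairs that do form a crossing match: the pairs (c₁, t₁) and (t₂, c₂) form a crossing match, and likewise the pairs (t₁, c₁) and (c₂, t₂) form a crossing match. -/
def Separated {α : Type*} [LinearOrder α] (a b c d : α) : Prop :=
  max a b < min c d ∨ max c d < min a b

section Separated

variable {α : Type*} [LinearOrder α] {a b c d : α}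

theorem Separated.symm (h : Separated a b c d) : Separated c d a b :=
  Or.symm h

theorem Separated.swap_right (h : Separated a b c d) : Separated a b d c := by
  rwa [Separated, max_comm d, min_comm d]

theorem separated_or_separated_of_lt_of_lt (hbc : b < c) (hcd : c < d) (hac : a ≠ c) :
    Separated a b c d ∨ Separated a d c b := by
  rcases hac.lt_or_gt with hac | hca
  · exact Or.inl (Or.inl (max_lt_iff.2 ⟨lt_min hac (hac.trans hcd), lt_min hbc (hbc.trans hcd)⟩))
  · exact Or.inr (Or.inr (max_lt_iff.2 ⟨lt_min hca hcd, lt_min (hbc.trans hca) (hbc.trans hcd)⟩))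

theorem separated_or_separated_or_separated (hab : a ≠ b) (hac : a ≠ c) (had : a ≠ d)
    (hbc : b ≠ c) (hbd : b ≠ d) (hcd : c ≠ d) :
    Separated a b c d ∨ Separated a c b d ∨ Separated a d b c := by
  rcases hbc.lt_or_gt with hbc | hcb <;> rcases hcd.lt_or_gt with hcd | hdc
  · rcases separated_or_separated_of_lt_of_lt hbc hcd hac with h | h
    exacts [Or.inl h, Or.inr (Or.inr h.swap_right)]
  · rcases hbd.lt_or_gt with hbd | hdb
    · rcases separated_or_separated_of_lt_of_lt hbd hdc had with h | h
      exacts [Or.inl h.swap_right, Or.inr (Or.inl h.swap_right)]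
    · rcases separated_or_separated_of_lt_of_lt hdb hbc hab with h | h
      exacts [Or.inr (Or.inr h), Or.inr (Or.inl h)]
  · rcases hbd.lt_or_gt with hbd | hdb
    · rcases separated_or_separated_of_lt_of_lt hcb hbd hab with h | h
      exacts [Or.inr (Or.inl h), Or.inr (Or.inr h)]
    · rcases separated_or_separated_of_lt_of_lt hcd hdb had with h | h
      exacts [Or.inr (Or.inl h.swap_right), Or.inl h.swap_right]
  · rcases separated_or_separated_of_lt_of_lt hdc hcb hac with h | h
    exacts [Or.inr (Or.inr h.swap_right), Or.inl h]

end Separated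

theorem crossingMatch_iff_separated {t1 c1 t2 c2 : ℝ} :
    CrossingMatch t1 c1 t2 c2 ↔ Separated t1 c2 c1 t2 := by
  rw [CrossingMatch, Separated, max_comm t2, min_comm c2]

theorem Overlapping.not_separated {x1 y1 x2 y2 : ℝ} (h : Overlapping x1 y1 x2 y2) :
    ¬ Separated x1 y1 x2 y2 := by
  rintro (hsep | hsep) <;> rcases h with ⟨h12, h21⟩ | ⟨h21, h12⟩
  all_goals linarith [min_le_max (a := x1) (b := y1), min_le_max (a := x2) (b := y2)]

/-- If two matched pairs `(t1, c1)` and `(t2, c2)` with four distinct propensity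
scores are overlapping and do not form a crossing match, then exchanging the
treated and control roles within exactly one of the two pairs produces pairs
that do form a crossing match. -/
theorem overlapping_single_flip_creates_crossing
    (lt1 lc1 lt2 lc2 : ℝ)
    (h1 : lt1 ≠ lc1) (h2 : lt1 ≠ lt2) (h3 : lt1 ≠ lc2)
    (h4 : lc1 ≠ lt2) (h5 : lc1 ≠ lc2) (h6 : lt2 ≠ lc2)
    (hover : Overlapping lt1 lc1 lt2 lc2)
    (hnocross : ¬ CrossingMatch lt1 lc1 lt2 lc2) :
    CrossingMatch lc1 lt1 lt2 lc2 ∧ CrossingMatch lt1 lc1 lc2 lt2 := by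
  have hsep : Separated lt1 lt2 lc1 lc2 :=
    ((separated_or_separated_or_separated h1 h2 h3 h4 h5 h6).resolve_left
      hover.not_separated).resolve_right (mt crossingMatch_iff_separated.2 hnocross)
  exact ⟨crossingMatch_iff_separated.2 hsep.symm, crossingMatch_iff_separated.2 hsep⟩
end

section
/- Consider four units t₁, t₂, c₁, c₂ with distinct real propensity scores, with treated set T = {t₁, t₂} and control set C = {c₁, c₂}, and suppose the pairing grouping {t₁, c₁} and {t₂, c₂} is an optimal pair matching of T to C. (i) If the two pairs are not overlapping, then for every within-pair exchange of treated and control roles (none, the first pair only, the second pair only, or both pairs) the same grouping {t₁, c₁}, {t₂, c₂} remains an optimal pair matching of the new treated set to the new control set. (ii) If the two pairs are overlapping, the grouping remains an optimal pair matching when neither pair or both pairs have their roles exchanged, but it is not optimal when exactly one pair has its roles exchanged. -/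
/-! Among matchings of two units to two units, the grouping is optimal exactly when it costs
no more than the crossed grouping. Write `a, b, c, d` for the scores of `t₁, c₁, t₂, c₂`. Exchanging
roles in neither or both pairs keeps this the comparison of `{a, b}, {c, d}` with `{a, d}, {b, c}`,
while exchanging roles in exactly one pair turns it into the comparison with `{a, c}, {b, d}`.
Non-overlapping pairs lie in disjoint intervals, so their grouping beats both other pairings.
For overlapping pairs the other two pairings together cost strictly less than twice the grouping;
as optimality says one of them costs at least as much as the grouping, the other costs less. -/

section PairMatching

variable {α : Type*} [DecidableEq α] {p q r s : α} {ν : α → α}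

lemma isMatching_pair (hrs : r ≠ s) (hp : ν p = r) (hq : ν q = s) :
    IsMatching {p, q} {r, s} ν := by
  refine ⟨?_, by simp [hp, hq]⟩
  rw [Finset.coe_pair, Set.injOn_pair]
  exact fun h => absurd (hp ▸ hq ▸ h) hrs

lemma matchCost_pair (score : α → ℝ) (hpq : p ≠ q) (hp : ν p = r) (hq : ν q = s) :
    matchCost score {p, q} ν = |score p - score r| + |score q - score s| := by
  rw [matchCost, Finset.sum_pair hpq, hp, hq]

lemma IsMatching.eq_or_eq_of_pair (hpq : p ≠ q) (hν : IsMatching {p, q} {r, s} ν) :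
    (ν p = r ∧ ν q = s) ∨ (ν p = s ∧ ν q = r) := by
  obtain ⟨hinj, hmem⟩ := hν
  have hp := hmem p (by simp)
  have hq := hmem q (by simp)
  have hne : ν p ≠ ν q := fun h => hpq (hinj (by simp) (by simp) h)
  simp only [Finset.mem_insert, Finset.mem_singleton] at hp hq
  rcases hp with hp | hp <;> rcases hq with hq | hq <;> simp_all

lemma isOptimalMatching_pair_iff (score : α → ℝ) (hpq : p ≠ q) (hrs : r ≠ s)
    (hp : ν p = r) (hq : ν q = s) :
    IsOptimalMatching score {p, q} {r, s} ν ↔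
      |score p - score r| + |score q - score s| ≤ |score p - score s| + |score q - score r| := by
  rw [IsOptimalMatching, matchCost_pair score hpq hp hq]
  constructor
  · rintro ⟨-, hmin⟩
    have hcross : IsMatching {p, q} {r, s} (fun x => if x = p then s else r) := by
      rw [Finset.pair_comm r s]
      exact isMatching_pair hrs.symm (if_pos rfl) (if_neg hpq.symm)
    simpa [matchCost_pair (ν := fun x => if x = p then s else r) score hpq (if_pos rfl)
      (if_neg hpq.symm)] using hmin _ hcross
  · refine fun hle => ⟨isMatching_pair hrs hp hq, fun μ hμ => ?_⟩
    rcases hμ.eq_or_eq_of_pair hpq with ⟨hμp, hμq⟩ | ⟨hμp, hμq⟩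
    · rw [matchCost_pair score hpq hμp hμq]
    · rwa [matchCost_pair score hpq hμp hμq]

end PairMatching

section Overlap

variable {a b c d : ℝ}

lemma max_le_min_or_max_le_min_of_not_overlapping (hac : a ≠ c) (had : a ≠ d) (hbc : b ≠ c)
    (hbd : b ≠ d) (h : ¬ Overlapping a b c d) : max a b ≤ min c d ∨ max c d ≤ min a b := by
  simp only [Overlapping, not_or, not_and, not_lt] at h
  rcases lt_trichotomy (max a b) (max c d) with hlt | heq | hgt
  · exact .inl (h.2 hlt)
  · rcases max_choice a b with e | e <;> rcases max_choice c d with e' | e' <;>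
      rw [e, e'] at heq <;> contradiction
  · exact .inr (h.1 hgt)

lemma abs_sub_add_abs_sub_le_of_max_le_min (h : max c d ≤ min a b) :
    |a - b| + |c - d| ≤ |a - c| + |b - d| := by
  obtain ⟨⟨hca, hda⟩, hcb, hdb⟩ : (c ≤ a ∧ d ≤ a) ∧ c ≤ b ∧ d ≤ b := by
    simpa only [max_le_iff, le_min_iff] using h
  rw [abs_of_nonneg (sub_nonneg.2 hca), abs_of_nonneg (sub_nonneg.2 hdb)]
  rcases abs_cases (a - b) with ⟨hab, -⟩ | ⟨hab, -⟩ <;>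
    rcases abs_cases (c - d) with ⟨hcd, -⟩ | ⟨hcd, -⟩ <;> linarith

lemma abs_sub_add_abs_sub_le_of_not_overlapping (hac : a ≠ c) (had : a ≠ d) (hbc : b ≠ c)
    (hbd : b ≠ d) (h : ¬ Overlapping a b c d) : |a - b| + |c - d| ≤ |a - c| + |b - d| := by
  rcases max_le_min_or_max_le_min_of_not_overlapping hac had hbc hbd h with h | h
  · linarith [abs_sub_add_abs_sub_le_of_max_le_min h, abs_sub_comm a c, abs_sub_comm b d]
  · exact abs_sub_add_abs_sub_le_of_max_le_min h

lemma cross_sum_lt_of_lt_of_lt (hba : b < a) (hdc : d < c) (hbc : b < c) (hca : c < a) :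
    |a - c| + |b - d| + (|a - d| + |b - c|) < 2 * (|a - b| + |c - d|) := by
  rw [abs_of_pos (sub_pos.2 hca), abs_of_pos (sub_pos.2 (hdc.trans hca)),
    abs_of_neg (sub_neg.2 hbc), abs_of_pos (sub_pos.2 hba), abs_of_pos (sub_pos.2 hdc)]
  rcases abs_cases (b - d) with ⟨hbd, -⟩ | ⟨hbd, -⟩ <;> linarith

lemma cross_sum_lt_of_overlapping (hab : a ≠ b) (hcd : c ≠ d) (h : Overlapping a b c d) :
    |a - c| + |b - d| + (|a - d| + |b - c|) < 2 * (|a - b| + |c - d|) := by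
  wlog hba : b < a generalizing a b
  · have := this hab.symm (by simpa only [Overlapping, max_comm, min_comm] using h)
      (hab.lt_or_gt.resolve_right hba)
    linarith [abs_sub_comm a b]
  wlog hdc : d < c generalizing c d
  · have := this hcd.symm (by simpa only [Overlapping, max_comm, min_comm] using h)
      (hcd.lt_or_gt.resolve_right hdc)
    linarith [abs_sub_comm c d]
  rw [Overlapping, max_eq_left hba.le, min_eq_right hba.le, max_eq_left hdc.le,
    min_eq_right hdc.le] at h
  rcases h with ⟨hca, hbc⟩ | ⟨hac, hda⟩
  · exact cross_sum_lt_of_lt_of_lt hba hdc hbc hca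
  · linarith [cross_sum_lt_of_lt_of_lt hdc hba hda hac, abs_sub_comm a c, abs_sub_comm b d,
      abs_sub_comm a d, abs_sub_comm b c]

end Overlap

/-- Two treated units `t1, t2` and two controls `c1, c2` with distinct propensity
scores, where the grouping `{t1, c1}, {t2, c2}` is an optimal pair matching of
`{t1, t2}` to `{c1, c2}`.
(i) If the two pairs are not overlapping, then under every within-pair exchange
of treated and control roles (none, first only, second only, or both) the same
grouping remains an optimal pair matching of the new treated set to the new
control set.
(ii) If the two pairs are overlapping, the grouping remains optimal when neither
or both pairs have their roles exchanged, but it is not optimal when exactly one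
pair has its roles exchanged. -/
theorem two_pairs_overlap_permutation_optimality {α : Type*} [DecidableEq α]
    (score : α → ℝ) (t1 t2 c1 c2 : α)
    (h1 : score t1 ≠ score c1) (h2 : score t1 ≠ score t2) (h3 : score t1 ≠ score c2)
    (h4 : score c1 ≠ score t2) (h5 : score c1 ≠ score c2) (h6 : score t2 ≠ score c2)
    (μ : α → α) (hμ1 : μ t1 = c1) (hμ2 : μ t2 = c2)
    (hopt : IsOptimalMatching score {t1, t2} {c1, c2} μ) :
    (¬ Overlapping (score t1) (score c1) (score t2) (score c2) →
      ((∀ ν : α → α, ν t1 = c1 → ν t2 = c2 →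
          IsOptimalMatching score {t1, t2} {c1, c2} ν) ∧
       (∀ ν : α → α, ν c1 = t1 → ν t2 = c2 →
          IsOptimalMatching score {c1, t2} {t1, c2} ν) ∧
       (∀ ν : α → α, ν t1 = c1 → ν c2 = t2 →
          IsOptimalMatching score {t1, c2} {c1, t2} ν) ∧
       (∀ ν : α → α, ν c1 = t1 → ν c2 = t2 →
          IsOptimalMatching score {c1, c2} {t1, t2} ν))) ∧
    (Overlapping (score t1) (score c1) (score t2) (score c2) →
      ((∀ ν : α → α, ν t1 = c1 → ν t2 = c2 →
          IsOptimalMatching score {t1, t2} {c1, c2} ν) ∧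
       (∀ ν : α → α, ν c1 = t1 → ν c2 = t2 →
          IsOptimalMatching score {c1, c2} {t1, t2} ν) ∧
       (∀ ν : α → α, ν c1 = t1 → ν t2 = c2 →
          ¬ IsOptimalMatching score {c1, t2} {t1, c2} ν) ∧
       (∀ ν : α → α, ν t1 = c1 → ν c2 = t2 →
          ¬ IsOptimalMatching score {t1, c2} {c1, t2} ν))) := by
  have ht1t2 := ne_of_apply_ne score h2
  have hc1c2 := ne_of_apply_ne score h5
  have ht1c2 := ne_of_apply_ne score h3
  have hc1t2 := ne_of_apply_ne score h4
  have hgrouped := (isOptimalMatching_pair_iff score ht1t2 hc1c2 hμ1 hμ2).1 hopt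
  have hcomm := fun x y : α => abs_sub_comm (score x) (score y)
  refine ⟨fun hno => ⟨?_, ?_, ?_, ?_⟩, fun hov => ⟨?_, ?_, ?_, ?_⟩⟩ <;> intro ν hp hq
  · exact (isOptimalMatching_pair_iff score ht1t2 hc1c2 hp hq).2 hgrouped
  · rw [isOptimalMatching_pair_iff score hc1t2 ht1c2 hp hq]
    linarith [abs_sub_add_abs_sub_le_of_not_overlapping h2 h3 h4 h5 hno, hcomm t1 c1, hcomm t1 t2]
  · rw [isOptimalMatching_pair_iff score ht1c2 hc1t2 hp hq]
    linarith [abs_sub_add_abs_sub_le_of_not_overlapping h2 h3 h4 h5 hno, hcomm t2 c2, hcomm c1 c2]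
  · rw [isOptimalMatching_pair_iff score hc1c2 ht1t2 hp hq]
    linarith [hcomm t1 c1, hcomm t2 c2, hcomm c1 t2, hcomm t1 c2]
  · exact (isOptimalMatching_pair_iff score ht1t2 hc1c2 hp hq).2 hgrouped
  · rw [isOptimalMatching_pair_iff score hc1c2 ht1t2 hp hq]
    linarith [hcomm t1 c1, hcomm t2 c2, hcomm c1 t2, hcomm t1 c2]
  · rw [isOptimalMatching_pair_iff score hc1t2 ht1c2 hp hq, not_le]
    linarith [cross_sum_lt_of_overlapping h1 h6 hov, hcomm t1 c1, hcomm t1 t2, hcomm c1 t2]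
  · rw [isOptimalMatching_pair_iff score ht1c2 hc1t2 hp hq, not_le]
    linarith [cross_sum_lt_of_overlapping h1 h6 hov, hcomm t2 c2, hcomm c1 c2, hcomm c1 t2]
end

section
/- Let P₁, …, P_L be pairwise disjoint closed intervals of ℝ, and let T and C be finite disjoint sets of units with distinct real propensity scores, every score lying in ⋃ᵢ Pᵢ, such that for each i the number of treated units with score in Pᵢ equals the number of control units with score in Pᵢ (so in particular |T| = |C|). Then every optimal pair matching μ : T → C pairs units only within the same interval: for every t ∈ T, λ_t and λ_{μ(t)} belong to the same interval Pᵢ. -/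
/-! Suppose an optimal matching sends a treated unit with score in `P i` outside `P i`, say
upwards, and cut the line at `c = max P i`. Every interval lies on one side of `c`, so `T`
and `C` have equally many scores `≤ c` and equally many `> c`. An injection `T → C` that
moves one treated unit up across `c` must then move another one down across `c`, and
exchanging the partners of these two units strictly lowers the cost. -/

open Finset Function

theorem Set.InjOn.exists_and_not_of_card_filter_eq {α : Type*} {T C : Finset α} {μ : α → α}
    (hinj : Set.InjOn μ T) (hmaps : ∀ t ∈ T, μ t ∈ C) {q : α → Prop} [DecidablePred q]
    (hcard : #{x ∈ T | q x} = #{x ∈ C | q x}) {t : α} (ht : t ∈ T) (hqt : ¬ q t)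
    (hqμt : q (μ t)) : ∃ s ∈ T, q s ∧ ¬ q (μ s) := by
  classical
  by_contra! h
  have hlt : #{x ∈ C | q x} < #(insert t {x ∈ T | q x}) := by
    rw [card_insert_of_notMem (by simp [hqt]), hcard]
    exact Nat.lt_succ_self _
  have hsub : insert t {x ∈ T | q x} ⊆ T := Finset.insert_subset ht (filter_subset _ _)
  obtain ⟨x, hx, y, hy, hne, hxy⟩ := exists_ne_map_eq_of_card_lt_of_maps_to hlt (f := μ) <| by
    intro s hs
    rcases Finset.mem_insert.mp hs with rfl | hs
    · exact mem_filter.mpr ⟨hmaps s ht, hqμt⟩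
    · obtain ⟨hsT, hqs⟩ := mem_filter.mp hs
      exact mem_filter.mpr ⟨hmaps s hsT, h s hsT hqs⟩
  exact hne (hinj (hsub hx) (hsub hy) hxy)

theorem card_filter_mem_eq_of_pairwise_disjoint {α β ι : Type*} [Fintype ι] {f : α → β}
    {P : ι → Set β} (hP : Pairwise (Disjoint on P)) {S T : Finset α}
    (hS : ∀ x ∈ S, ∃ i, f x ∈ P i) (hT : ∀ x ∈ T, ∃ i, f x ∈ P i)
    [∀ i, DecidablePred fun x => f x ∈ P i]
    (hcount : ∀ i, #{x ∈ S | f x ∈ P i} = #{x ∈ T | f x ∈ P i})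
    {U : Set β} [DecidablePred fun x => f x ∈ U] (hU : ∀ i, P i ⊆ U ∨ P i ⊆ Uᶜ) :
    #{x ∈ S | f x ∈ U} = #{x ∈ T | f x ∈ U} := by
  classical
  have hsum : ∀ R : Finset α, (∀ x ∈ R, ∃ i, f x ∈ P i) →
      #{x ∈ R | f x ∈ U} = ∑ i with P i ⊆ U, #{x ∈ R | f x ∈ P i} := by
    intro R hR
    rw [← card_biUnion]
    · congr 1
      ext x
      simp only [mem_filter, mem_biUnion, mem_univ, true_and]
      constructor
      · rintro ⟨hx, hxU⟩
        obtain ⟨i, hi⟩ := hR x hx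
        exact ⟨i, (hU i).resolve_right fun h => h hi hxU, hx, hi⟩
      · rintro ⟨i, hiU, hx, hi⟩
        exact ⟨hx, hiU hi⟩
    · intro i _ j _ hij
      exact disjoint_filter_filter' _ _ fun r hri hrj x hx =>
        Set.disjoint_left.mp (hP hij) (hri x hx) (hrj x hx)
  rw [hsum S hS, hsum T hT]
  exact sum_congr rfl fun i _ => hcount i

theorem Icc_subset_Iic_or_subset_compl {β ι : Type*} [LinearOrder β] {lo hi : ι → β}
    (h : Pairwise (Disjoint on fun i => Set.Icc (lo i) (hi i))) {i : ι} (hne : lo i ≤ hi i)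
    (k : ι) :
    Set.Icc (lo k) (hi k) ⊆ Set.Iic (hi i) ∨ Set.Icc (lo k) (hi k) ⊆ (Set.Iic (hi i))ᶜ := by
  rcases le_or_gt (hi k) (hi i) with hk | hk
  · exact Or.inl fun x hx => hx.2.trans hk
  · refine Or.inr fun x hx hxi => ?_
    have hik : i ≠ k := by rintro rfl; exact lt_irrefl _ hk
    exact Set.disjoint_left.mp (h hik) ⟨hne, le_rfl⟩ ⟨hx.1.trans hxi, hk.le⟩

theorem abs_sub_add_abs_sub_lt_of_le_of_lt {a b d e c : ℝ} (ha : a ≤ c) (hb : c < b)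
    (he : e ≤ c) (hd : c < d) : |a - e| + |d - b| < |a - b| + |d - e| := by
  rw [abs_of_neg (by linarith : a - b < 0), abs_of_pos (by linarith : 0 < d - e)]
  have hae : |a - e| ≤ (c - a) + (c - e) := abs_sub_le_iff.mpr ⟨by linarith, by linarith⟩
  have hdb : |d - b| < (d - c) + (b - c) := abs_sub_lt_iff.mpr ⟨by linarith, by linarith⟩
  linarith

namespace IsOptimalMatching

variable {α : Type*} {score : α → ℝ} {T C : Finset α} {μ : α → α}

theorem add_le_swap (hopt : IsOptimalMatching score T C μ) {t₁ t₂ : α} (h₁ : t₁ ∈ T)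
    (h₂ : t₂ ∈ T) :
    |score t₁ - score (μ t₁)| + |score t₂ - score (μ t₂)| ≤
      |score t₁ - score (μ t₂)| + |score t₂ - score (μ t₁)| := by
  classical
  rcases eq_or_ne t₁ t₂ with rfl | hne
  · exact le_rfl
  set ν : α → α := μ ∘ Equiv.swap t₁ t₂
  have hswap : ∀ x ∈ T, Equiv.swap t₁ t₂ x ∈ T := by
    intro x hx
    rw [Equiv.swap_apply_def]
    split_ifs <;> assumption
  have hν : IsMatching T C ν :=
    ⟨fun x hx y hy hxy =>
      (Equiv.swap t₁ t₂).injective (hopt.1.1 (hswap x hx) (hswap y hy) hxy),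
      fun x hx => hopt.1.2 _ (hswap x hx)⟩
  have hpair : {t₁, t₂} ⊆ T := insert_subset h₁ (singleton_subset_iff.mpr h₂)
  have hrest : ∑ x ∈ T \ {t₁, t₂}, |score x - score (ν x)| =
      ∑ x ∈ T \ {t₁, t₂}, |score x - score (μ x)| := by
    refine sum_congr rfl fun x hx => ?_
    simp only [mem_sdiff, mem_insert, mem_singleton, not_or] at hx
    simp [ν, Equiv.swap_apply_of_ne_of_ne hx.2.1 hx.2.2]
  have hcost := hopt.2 ν hν
  rw [matchCost, matchCost, ← sum_sdiff hpair, ← sum_sdiff hpair (f := fun x => _), hrest,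
    sum_pair hne, sum_pair hne] at hcost
  simpa [ν] using hcost

theorem score_le_iff_of_card_filter_eq (hopt : IsOptimalMatching score T C μ) {c : ℝ}
    (hle : #{x ∈ T | score x ≤ c} = #{x ∈ C | score x ≤ c})
    (hgt : #{x ∈ T | c < score x} = #{x ∈ C | c < score x}) {t : α} (ht : t ∈ T) :
    score t ≤ c ↔ score (μ t) ≤ c := by
  have no_crossing : ∀ t₁ ∈ T, ∀ t₂ ∈ T, score t₁ ≤ c → c < score (μ t₁) →
      score (μ t₂) ≤ c → c < score t₂ → False := by
    intro t₁ h₁ t₂ h₂ ha hb he hd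
    linarith [hopt.add_le_swap h₁ h₂, abs_sub_add_abs_sub_lt_of_le_of_lt ha hb he hd]
  constructor
  · intro htc
    by_contra! hμt
    obtain ⟨s, hs, hsc, hμs⟩ := hopt.1.1.exists_and_not_of_card_filter_eq hopt.1.2 hgt ht
      htc.not_gt hμt
    exact no_crossing t ht s hs htc hμt (not_lt.mp hμs) hsc
  · intro hμt
    by_contra! htc
    obtain ⟨s, hs, hsc, hμs⟩ := hopt.1.1.exists_and_not_of_card_filter_eq hopt.1.2 hle ht
      htc.not_ge hμt
    exact no_crossing s hs t ht hsc (not_le.mp hμs) hμt htc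

end IsOptimalMatching

theorem optimal_match_respects_disjoint_intervals_general {α : Type*} [DecidableEq α]
    (score : α → ℝ) (T C : Finset α)
    (L : ℕ) (lo hi : Fin L → ℝ)
    (hIdisj : ∀ i j, i ≠ j → Disjoint (Set.Icc (lo i) (hi i)) (Set.Icc (lo j) (hi j)))
    (hcover : ∀ x, x ∈ T ∪ C → ∃ i, score x ∈ Set.Icc (lo i) (hi i))
    (hcount : ∀ i,
      ({x | x ∈ T ∧ score x ∈ Set.Icc (lo i) (hi i)} : Set α).ncard =
        ({x | x ∈ C ∧ score x ∈ Set.Icc (lo i) (hi i)} : Set α).ncard)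
    (μ : α → α) (hopt : IsOptimalMatching score T C μ) :
    ∀ t ∈ T, ∃ i, score t ∈ Set.Icc (lo i) (hi i) ∧
      score (μ t) ∈ Set.Icc (lo i) (hi i) := by
  classical
  have hbalanced : ∀ U : Set ℝ,
      (∀ i, Set.Icc (lo i) (hi i) ⊆ U ∨ Set.Icc (lo i) (hi i) ⊆ Uᶜ) →
      #{x ∈ T | score x ∈ U} = #{x ∈ C | score x ∈ U} :=
    fun U hU => card_filter_mem_eq_of_pairwise_disjoint hIdisj
      (fun x hx => hcover x (mem_union_left _ hx)) (fun x hx => hcover x (mem_union_right _ hx))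
      (fun i => by simpa only [← coe_filter, Set.ncard_coe_finset] using hcount i) hU
  have hrespects : ∀ k, lo k ≤ hi k →
      ∀ t ∈ T, (score t ≤ hi k ↔ score (μ t) ≤ hi k) := by
    intro k hk t ht
    have hsat := Icc_subset_Iic_or_subset_compl hIdisj hk
    refine hopt.score_le_iff_of_card_filter_eq (hbalanced _ hsat) ?_ ht
    simpa only [Set.mem_compl_iff, Set.mem_Iic, not_le] using
      hbalanced (Set.Iic (hi k))ᶜ fun i => by simpa only [compl_compl, or_comm] using hsat i
  intro t ht
  by_contra! hcross
  obtain ⟨i, hti⟩ := hcover t (mem_union_left _ ht)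
  obtain ⟨j, hμj⟩ := hcover (μ t) (mem_union_right _ (hopt.1.2 t ht))
  rcases le_total (score t) (score (μ t)) with hle | hle
  · exact hcross i hti ⟨hti.1.trans hle, (hrespects i (hti.1.trans hti.2) t ht).1 hti.2⟩
  · exact hcross j ⟨hμj.1.trans hle, (hrespects j (hμj.1.trans hμj.2) t ht).2 hμj.2⟩ hμj

/-- Lemma S2: let `P i = [lo i, hi i]`, `i = 1, …, L`, be pairwise disjoint closed
intervals of `ℝ`, and let `T` and `C` be finite disjoint sets of units with
distinct propensity scores, every score lying in `⋃ᵢ P i`, such that for each `i`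
the number of treated units with score in `P i` equals the number of control units
with score in `P i`. Then every optimal pair matching of `T` to `C` pairs units
only within the same interval. -/
theorem optimal_match_respects_disjoint_intervals {α : Type*} [DecidableEq α]
    (score : α → ℝ) (T C : Finset α)
    (hdisj : Disjoint T C)
    (hinj : Set.InjOn score (↑T ∪ ↑C))
    (L : ℕ) (lo hi : Fin L → ℝ)
    (hIdisj : ∀ i j, i ≠ j → Disjoint (Set.Icc (lo i) (hi i)) (Set.Icc (lo j) (hi j)))
    (hcover : ∀ x, x ∈ T ∪ C → ∃ i, score x ∈ Set.Icc (lo i) (hi i))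
    (hcount : ∀ i,
      ({x | x ∈ T ∧ score x ∈ Set.Icc (lo i) (hi i)} : Set α).ncard =
        ({x | x ∈ C ∧ score x ∈ Set.Icc (lo i) (hi i)} : Set α).ncard)
    (μ : α → α) (hopt : IsOptimalMatching score T C μ) :
    ∀ t ∈ T, ∃ i, score t ∈ Set.Icc (lo i) (hi i) ∧
      score (μ t) ∈ Set.Icc (lo i) (hi i) :=
  optimal_match_respects_disjoint_intervals_general score T C L lo hi hIdisj hcover hcount μ hopt
end

section
/- Given a finite collection of matched pairs of units with distinct real propensity scores, associate to each connected component of the overlap graph the closed interval from the minimum to the maximum propensity score among all units in the pairs of that component. Then the intervals associated with distinct connected components are pairwise disjoint. -/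
def overlapGraph {ι : Type*} (hi lo : ι → ℝ) : SimpleGraph ι :=
  SimpleGraph.fromRel fun i j => Overlapping (hi i) (lo i) (hi j) (lo j)

def componentScores {ι : Type*} (hi lo : ι → ℝ)
    (c : (overlapGraph hi lo).ConnectedComponent) : Set ℝ :=
  {x | ∃ i, (overlapGraph hi lo).connectedComponentMk i = c ∧ (x = hi i ∨ x = lo i)}

noncomputable def componentInterval {ι : Type*} (hi lo : ι → ℝ)
    (c : (overlapGraph hi lo).ConnectedComponent) : Set ℝ :=
  Set.Icc (sInf (componentScores hi lo c)) (sSup (componentScores hi lo c))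

/-!
Overlapping pairs have intersecting score intervals `[ℓ, h]`, and with distinct scores the
converse holds. Hence along any walk in the overlap graph the intervals `[ℓ, h]` chain up
without gaps, so the intervals of the pairs of a component cover the whole component
interval. A score `x` in the intervals of two components would then lie in `[ℓ, h]` for a
pair of each, making these two pairs adjacent.
-/

open Set

theorem Overlapping.symm {x1 y1 x2 y2 : ℝ} (h : Overlapping x1 y1 x2 y2) :
    Overlapping x2 y2 x1 y1 :=
  Or.symm h

theorem Overlapping.min_lt_max_s9 {x1 y1 x2 y2 : ℝ} (h : Overlapping x1 y1 x2 y2) :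
    min x2 y2 < max x1 y1 := by
  rcases h with ⟨h12, -⟩ | ⟨-, h21⟩
  · exact (min_le_max).trans_lt h12
  · exact h21

theorem overlapping_of_mem_Icc {h₁ ℓ₁ h₂ ℓ₂ x : ℝ} (hh : h₁ ≠ h₂) (hℓ₁ : ℓ₁ ≠ h₂)
    (hℓ₂ : ℓ₂ ≠ h₁) (hx₁ : x ∈ Icc ℓ₁ h₁) (hx₂ : x ∈ Icc ℓ₂ h₂) :
    Overlapping h₁ ℓ₁ h₂ ℓ₂ := by
  have hℓh₁ : ℓ₁ ≤ h₁ := hx₁.1.trans hx₁.2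
  have hℓh₂ : ℓ₂ ≤ h₂ := hx₂.1.trans hx₂.2
  unfold Overlapping
  rw [max_eq_left hℓh₁, min_eq_right hℓh₁, max_eq_left hℓh₂, min_eq_right hℓh₂]
  rcases hh.lt_or_gt with h12 | h21
  · exact Or.inr ⟨h12, (hx₂.1.trans hx₁.2).lt_of_ne hℓ₂⟩
  · exact Or.inl ⟨h21, (hx₁.1.trans hx₂.2).lt_of_ne hℓ₁⟩

section OverlapGraph

variable {ι : Type*} {hi lo : ι → ℝ}

theorem overlapGraph_adj {i j : ι} :
    (overlapGraph hi lo).Adj i j ↔ i ≠ j ∧ Overlapping (hi i) (lo i) (hi j) (lo j) := by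
  rw [overlapGraph, SimpleGraph.fromRel_adj]
  exact and_congr_right fun _ => ⟨fun h => h.elim id Overlapping.symm, Or.inl⟩

theorem lo_lt_hi_of_overlapGraph_adj (hpair : ∀ i, lo i ≤ hi i) {i j : ι}
    (hij : (overlapGraph hi lo).Adj i j) : lo j < hi i := by
  have h := (overlapGraph_adj.mp hij).2.min_lt_max_s9
  rwa [min_eq_right (hpair j), max_eq_left (hpair i)] at h

theorem overlapGraph_adj_of_mem_Icc {i j : ι} (hij : i ≠ j) (hh : hi i ≠ hi j)
    (hℓi : lo i ≠ hi j) (hℓj : lo j ≠ hi i) {x : ℝ} (hxi : x ∈ Icc (lo i) (hi i))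
    (hxj : x ∈ Icc (lo j) (hi j)) : (overlapGraph hi lo).Adj i j :=
  overlapGraph_adj.mpr ⟨hij, overlapping_of_mem_Icc hh hℓi hℓj hxi hxj⟩

theorem exists_mem_Icc_of_overlapGraph_reachable (hpair : ∀ i, lo i ≤ hi i) {i j : ι}
    (hij : (overlapGraph hi lo).Reachable i j) {x : ℝ} (hxi : lo i ≤ x) (hxj : x ≤ hi j) :
    ∃ k, (overlapGraph hi lo).Reachable i k ∧ x ∈ Icc (lo k) (hi k) := by
  obtain ⟨w⟩ := hij
  induction w with
  | nil => exact ⟨_, .refl _, hxi, hxj⟩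
  | @cons i b j hib _ ih =>
    by_cases hx : x ≤ hi i
    · exact ⟨i, .refl _, hxi, hx⟩
    -- the next interval starts below `hi i < x`, so the chain has not jumped over `x`
    have hxb : lo b ≤ x := (lo_lt_hi_of_overlapGraph_adj hpair hib).le.trans (not_le.mp hx).le
    obtain ⟨k, hbk, hxk⟩ := ih hxb hxj
    exact ⟨k, hib.reachable.trans hbk, hxk⟩

variable {c : (overlapGraph hi lo).ConnectedComponent}

theorem componentScores_finite [Finite ι] : (componentScores hi lo c).Finite :=
  ((finite_range hi).union (finite_range lo)).subset <| by
    rintro y ⟨i, -, rfl | rfl⟩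
    exacts [Or.inl ⟨i, rfl⟩, Or.inr ⟨i, rfl⟩]

theorem componentScores_nonempty : (componentScores hi lo c).Nonempty := by
  obtain ⟨i, hic⟩ := c.exists_rep
  exact ⟨_, i, hic, Or.inl rfl⟩

theorem exists_lo_le_sInf_componentScores [Finite ι] (hpair : ∀ i, lo i ≤ hi i) :
    ∃ i, (overlapGraph hi lo).connectedComponentMk i = c ∧
      lo i ≤ sInf (componentScores hi lo c) := by
  obtain ⟨i, hic, hscore | hscore⟩ :=
    (componentScores_nonempty (c := c)).csInf_mem componentScores_finite
  · exact ⟨i, hic, hscore ▸ hpair i⟩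
  · exact ⟨i, hic, hscore.ge⟩

theorem exists_sSup_componentScores_le_hi [Finite ι] (hpair : ∀ i, lo i ≤ hi i) :
    ∃ i, (overlapGraph hi lo).connectedComponentMk i = c ∧
      sSup (componentScores hi lo c) ≤ hi i := by
  obtain ⟨i, hic, hscore | hscore⟩ :=
    (componentScores_nonempty (c := c)).csSup_mem componentScores_finite
  · exact ⟨i, hic, hscore.le⟩
  · exact ⟨i, hic, hscore ▸ hpair i⟩

theorem exists_mem_Icc_of_mem_componentInterval [Finite ι] (hpair : ∀ i, lo i ≤ hi i)
    {x : ℝ} (hx : x ∈ componentInterval hi lo c) :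
    ∃ k, (overlapGraph hi lo).connectedComponentMk k = c ∧ x ∈ Icc (lo k) (hi k) := by
  obtain ⟨i, hic, hlo⟩ := exists_lo_le_sInf_componentScores (c := c) hpair
  obtain ⟨j, hjc, hhi⟩ := exists_sSup_componentScores_le_hi (c := c) hpair
  obtain ⟨k, hik, hxk⟩ := exists_mem_Icc_of_overlapGraph_reachable hpair
    (SimpleGraph.ConnectedComponent.exact (hic.trans hjc.symm)) (hlo.trans hx.1) (hx.2.trans hhi)
  exact ⟨k, (SimpleGraph.ConnectedComponent.sound hik).symm.trans hic, hxk⟩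

end OverlapGraph

/-- Given a finite collection of matched pairs of units with distinct propensity
scores, the closed intervals spanned by distinct connected components of the
overlap graph are pairwise disjoint. -/
theorem component_intervals_pairwise_disjoint {ι : Type*} [Fintype ι]
    (hi lo : ι → ℝ) (hpair : ∀ i, lo i < hi i)
    (hdistinct : ∀ i j, i ≠ j →
      hi i ≠ hi j ∧ hi i ≠ lo j ∧ lo i ≠ hi j ∧ lo i ≠ lo j)
    (c d : (overlapGraph hi lo).ConnectedComponent) (hcd : c ≠ d) :
    Disjoint (componentInterval hi lo c) (componentInterval hi lo d) := by
  have hpair' : ∀ i, lo i ≤ hi i := fun i => (hpair i).le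
  refine Set.disjoint_left.mpr fun x hxc hxd => hcd ?_
  obtain ⟨k, rfl, hxk⟩ := exists_mem_Icc_of_mem_componentInterval hpair' hxc
  obtain ⟨m, rfl, hxm⟩ := exists_mem_Icc_of_mem_componentInterval hpair' hxd
  obtain rfl | hkm := eq_or_ne k m
  · rfl
  obtain ⟨hh, -, hℓk, -⟩ := hdistinct k m hkm
  exact SimpleGraph.ConnectedComponent.connectedComponentMk_eq_of_adj
    (overlapGraph_adj_of_mem_Icc hkm hh hℓk (hdistinct m k hkm.symm).2.2.1 hxk hxm)
end

section
/- One-control-swap sufficiency (Lemma S3): let T and C be finite disjoint sets of units with distinct real propensity scores and |C| ≥ |T|, let f(μ) = Σ_{t∈T} |λ_t − λ_{μ(t)}| be the cost of an injection μ : T → C, and let μ* : T → C be an injection with range C* = μ*(T). Suppose that no injection μ with range exactly C* satisfies f(μ) < f(μ*). Then there exists an injection μ : T → C with f(μ) < f(μ*) if and only if there exists an injection μ : T → C with f(μ) < f(μ*) whose range differs from C* by at most one element, i.e. |μ(T) ∖ C*| ≤ 1. -/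
open Classical in
theorem matchCost_piecewise_add_piecewise {α : Type*} (score : α → ℝ) (T : Finset α)
    (S : Set α) (μ ν : α → α) :
    matchCost score T (S.piecewise μ ν) + matchCost score T (S.piecewise ν μ)
      = matchCost score T μ + matchCost score T ν := by
  simp only [matchCost, ← Finset.sum_add_distrib]
  refine Finset.sum_congr rfl fun t _ => ?_
  by_cases ht : t ∈ S <;> simp [ht, add_comm]

namespace IsMatching

variable {α : Type*} {T C : Finset α} {μ ν : α → α}

open Classical in
theorem piecewise (hμ : IsMatching T C μ) (hν : IsMatching T C ν) (S : Set α)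
    (hsep : ∀ a ∈ T, a ∈ S → ∀ b ∈ T, b ∉ S → μ a ≠ ν b) :
    IsMatching T C (S.piecewise μ ν) := by
  refine ⟨fun a ha b hb hab => ?_, fun t ht => ?_⟩
  · by_cases haS : a ∈ S <;> by_cases hbS : b ∈ S <;>
      simp only [Set.piecewise, haS, hbS, if_true, if_false] at hab
    · exact hμ.1 ha hb hab
    · exact absurd hab (hsep a ha haS b hb hbS)
    · exact absurd hab.symm (hsep b hb hbS a ha haS)
    · exact hν.1 ha hb hab
  · by_cases htS : t ∈ S
    · simpa [htS] using hμ.2 t ht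
    · simpa [htS] using hν.2 t ht

end IsMatching

section AlternatingChain

variable {α : Type*} {T : Finset α} {μ ν : α → α} {t₀ t s : α}

def alternatingChain (T : Finset α) (μ ν : α → α) (t₀ : α) : Set α :=
  {t | Relation.ReflTransGen (fun t s => s ∈ T ∧ μ s = ν t) t₀ t}

theorem start_mem_alternatingChain : t₀ ∈ alternatingChain T μ ν t₀ :=
  Relation.ReflTransGen.refl

theorem alternatingChain_subset (ht₀ : t₀ ∈ T) : alternatingChain T μ ν t₀ ⊆ T := by
  intro t ht
  induction ht with
  | refl => exact ht₀
  | tail _ hstep _ => exact hstep.1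

theorem mem_alternatingChain_of_apply_eq (ht : t ∈ alternatingChain T μ ν t₀) (hs : s ∈ T)
    (hst : μ s = ν t) : s ∈ alternatingChain T μ ν t₀ :=
  Relation.ReflTransGen.tail ht ⟨hs, hst⟩

theorem eq_or_exists_of_mem_alternatingChain (ht : t ∈ alternatingChain T μ ν t₀) :
    t = t₀ ∨ ∃ s ∈ alternatingChain T μ ν t₀, μ t = ν s := by
  rcases Relation.ReflTransGen.cases_tail ht with rfl | ⟨s, hs, -, hst⟩
  · exact .inl rfl
  · exact .inr ⟨s, hs, hst⟩

end AlternatingChain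

section Exchange

variable {α : Type*} [DecidableEq α] {T C : Finset α} {μ ν : α → α} {c : α}

open Classical in
theorem exists_exchange_of_mem_image_sdiff (hμ : IsMatching T C μ) (hν : IsMatching T C ν)
    (hc : c ∈ T.image μ \ T.image ν) :
    ∃ S : Set α, IsMatching T C (S.piecewise μ ν) ∧ IsMatching T C (S.piecewise ν μ) ∧
      T.image (S.piecewise μ ν) \ T.image ν ⊆ {c} ∧
      T.image (S.piecewise ν μ) \ T.image ν ⊆ (T.image μ \ T.image ν).erase c := by
  obtain ⟨hcμ, hcν⟩ := Finset.mem_sdiff.1 hc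
  obtain ⟨t₀, ht₀, rfl⟩ := Finset.mem_image.1 hcμ
  set S := alternatingChain T μ ν t₀
  have hST : S ⊆ T := alternatingChain_subset ht₀
  refine ⟨S, hμ.piecewise hν S fun a _ ha b hb hbS hab => ?_,
    hν.piecewise hμ S fun a _ ha b hb hbS hab => ?_, fun x hx => ?_, fun x hx => ?_⟩
  · rcases eq_or_exists_of_mem_alternatingChain ha with rfl | ⟨s, hs, hsa⟩
    · exact hcν (Finset.mem_image.2 ⟨b, hb, hab.symm⟩)
    · exact hbS (hν.1 (hST hs) hb (hsa ▸ hab) ▸ hs)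
  · exact hbS (mem_alternatingChain_of_apply_eq ha hb hab.symm)
  · obtain ⟨⟨t, ht, rfl⟩, hxν⟩ := by simpa only [Finset.mem_sdiff, Finset.mem_image] using hx
    by_cases htS : t ∈ S
    · rw [Set.piecewise_eq_of_mem _ _ _ htS] at hxν ⊢
      rcases eq_or_exists_of_mem_alternatingChain htS with rfl | ⟨s, hs, hts⟩
      · exact Finset.mem_singleton_self _
      · exact absurd ⟨s, hST hs, hts.symm⟩ hxν
    · rw [Set.piecewise_eq_of_notMem _ _ _ htS] at hxν
      exact absurd ⟨t, ht, rfl⟩ hxν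
  · obtain ⟨⟨t, ht, rfl⟩, hxν⟩ := by simpa only [Finset.mem_sdiff, Finset.mem_image] using hx
    by_cases htS : t ∈ S
    · rw [Set.piecewise_eq_of_mem _ _ _ htS] at hxν
      exact absurd ⟨t, ht, rfl⟩ hxν
    · rw [Set.piecewise_eq_of_notMem _ _ _ htS] at hxν ⊢
      refine Finset.mem_erase.2 ⟨fun h => htS ?_, Finset.mem_sdiff.2
        ⟨Finset.mem_image_of_mem μ ht, by simpa only [Finset.mem_image] using hxν⟩⟩
      exact hμ.1 ht ht₀ h ▸ start_mem_alternatingChain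

end Exchange

theorem exists_matchCost_lt_card_image_sdiff_le_one {α : Type*} [DecidableEq α]
    (score : α → ℝ) {T C : Finset α} {μ ν : α → α} (hμ : IsMatching T C μ)
    (hν : IsMatching T C ν) (hlt : matchCost score T μ < matchCost score T ν) :
    ∃ μ', IsMatching T C μ' ∧ (T.image μ' \ T.image ν).card ≤ 1 ∧
      matchCost score T μ' < matchCost score T ν := by
  induction hn : (T.image μ \ T.image ν).card using Nat.strong_induction_on generalizing μ with
  | _ n ih =>
    by_cases hle : n ≤ 1
    · exact ⟨μ, hμ, hn ▸ hle, hlt⟩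
    obtain ⟨c, hc⟩ : (T.image μ \ T.image ν).Nonempty := Finset.card_pos.1 (by omega)
    obtain ⟨S, hμ₁, hμ₂, himage₁, himage₂⟩ := exists_exchange_of_mem_image_sdiff hμ hν hc
    have hsum := matchCost_piecewise_add_piecewise score T S μ ν
    by_cases hlt₁ : matchCost score T (S.piecewise μ ν) < matchCost score T ν
    · exact ⟨_, hμ₁, (Finset.card_le_card himage₁).trans (Finset.card_singleton c).le, hlt₁⟩
    · have hcard₂ := (Finset.card_le_card himage₂).trans_lt (Finset.card_erase_lt_of_mem hc)
      exact ih _ (hn ▸ hcard₂) hμ₂ (by linarith) rfl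

theorem one_control_swap_sufficiency_general {α : Type*} [DecidableEq α]
    (score : α → ℝ) (T C : Finset α)
    (μstar : α → α) (hμstar : IsMatching T C μstar) :
    (∃ μ : α → α, IsMatching T C μ ∧
        matchCost score T μ < matchCost score T μstar)
      ↔ (∃ μ : α → α, IsMatching T C μ ∧
          (T.image μ \ T.image μstar).card ≤ 1 ∧
          matchCost score T μ < matchCost score T μstar) :=
  ⟨fun ⟨_, hμ, hlt⟩ => exists_matchCost_lt_card_image_sdiff_le_one score hμ hμstar hlt,
    fun ⟨μ, hμ, _, hlt⟩ => ⟨μ, hμ, hlt⟩⟩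

/-- One-control-swap sufficiency (Lemma S3): let `T` and `C` be finite disjoint
sets of units with distinct propensity scores and `|C| ≥ |T|`, and let `μ*` be a
pair matching of `T` to `C` with range (matched control set) `C* = μ*(T)`.
Suppose no pair matching with range exactly `C*` has strictly smaller cost than
`μ*`. Then there is a pair matching with strictly smaller cost than `μ*` if and
only if there is one whose range differs from `C*` by at most one control. -/
theorem one_control_swap_sufficiency {α : Type*} [DecidableEq α]
    (score : α → ℝ) (T C : Finset α)
    (hdisj : Disjoint T C)
    (hinj : Set.InjOn score (↑T ∪ ↑C))
    (hcard : T.card ≤ C.card)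
    (μstar : α → α) (hμstar : IsMatching T C μstar)
    (hbest : ∀ μ : α → α, IsMatching T C μ → T.image μ = T.image μstar →
      matchCost score T μstar ≤ matchCost score T μ) :
    (∃ μ : α → α, IsMatching T C μ ∧
        matchCost score T μ < matchCost score T μstar)
      ↔ (∃ μ : α → α, IsMatching T C μ ∧
          (T.image μ \ T.image μstar).card ≤ 1 ∧
          matchCost score T μ < matchCost score T μstar) :=
  one_control_swap_sufficiency_general score T C μstar hμstar
end
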